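/- (Freedom in the normal form.) Let v ∈ ℂ^d and β ∈ 𝔤, let κ ∈ G, and set β̂ = κ★β★κ⁻¹ − (ξ_v κ)★κ⁻¹; assume ξ_v β̂ = 0. Let κ̃ ∈ G, set β̃ = κ̃★β★κ̃⁻¹ − (ξ_v κ̃)★κ̃⁻¹, and let δ = κ̃★κ⁻¹. Then ξ_v β̃ = 0 if and only if both ξ_v δ = 0 and β̃ = δ★β̂★δ⁻¹ hold. -/

import Mathlib

open scoped BigOperators

/-- Convolution product on `ℂ^W`: `(δ★δ′)_w = Σ_{w=w₁w₂} δ_{w₁} δ′_{w₂}`. -/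
noncomputable def conv {A : Type*} (x y : List A → ℂ) : List A → ℂ :=
  fun w => ∑ i ∈ Finset.range (w.length + 1), x (w.take i) * y (w.drop i)

/-- Shuffle product of two words, as a multiset of words. -/
def shuffle {A : Type*} : List A → List A → Multiset (List A)
  | [], w => {w}
  | w, [] => {w}
  | a :: u, b :: v =>
      ((shuffle u (b :: v)).map (a :: ·)) + ((shuffle (a :: u) v).map (b :: ·))

/-- Membership in the group `G`: the shuffle relations with `γ_∅ = 1`. -/
def isGrp {A : Type*} (γ : List A → ℂ) : Prop :=
  γ [] = 1 ∧ ∀ w w' : List A, γ w * γ w' = ((shuffle w w').map γ).sum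

/-- Membership in the Lie algebra `𝔤`. -/
def isLie {A : Type*} (β : List A → ℂ) : Prop :=
  β [] = 0 ∧ ∀ w w' : List A, w ≠ [] → w' ≠ [] → ((shuffle w w').map β).sum = 0

/-- The unit `1` of the convolution product. -/
def unitCW {A : Type*} : List A → ℂ := fun w => match w with | [] => 1 | _ => 0

/-- `ν^v_ℓ = Σ_j v_j ν_{j,ℓ}` for a letter `ℓ`. -/
noncomputable def nuL {A : Type*} {d : ℕ} (ν : Fin d → A → ℂ) (v : Fin d → ℂ) (ℓ : A) : ℂ :=
  ∑ j, v j * ν j ℓ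

/-- `ν^v_w = ν^v_{ℓ₁} + ⋯ + ν^v_{ℓ_n}` for a word `w = ℓ₁⋯ℓ_n`. -/
noncomputable def nuW {A : Type*} {d : ℕ} (ν : Fin d → A → ℂ) (v : Fin d → ℂ) (w : List A) : ℂ :=
  (w.map (nuL ν v)).sum

/-- The operator `Ξ_v`: `(Ξ_v δ)_w = exp(ν^v_w) δ_w`. -/
noncomputable def XiOp {A : Type*} {d : ℕ} (ν : Fin d → A → ℂ) (v : Fin d → ℂ)
    (δ : List A → ℂ) : List A → ℂ :=
  fun w => Complex.exp (nuW ν v w) * δ w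

/-- The operator `ξ_v`: `(ξ_v δ)_w = ν^v_w δ_w`. -/
noncomputable def xiOp {A : Type*} {d : ℕ} (ν : Fin d → A → ℂ) (v : Fin d → ℂ)
    (δ : List A → ℂ) : List A → ℂ :=
  fun w => nuW ν v w * δ w

/-!
`ξ_v` is a derivation of the convolution algebra, so the gauge transformation
`β ↦ κ★β★κ⁻¹ − (ξ_v κ)★κ⁻¹` is an action: `β̃` is obtained from `β̂` by the transformation with
`δ = κ̃★κ⁻¹`, giving `β̃ = δ★β̂★δ⁻¹ − (ξ_v δ)★δ⁻¹`. If `ξ_v β̃ = 0`, then `ε = ξ_v δ = δ★β̂ − β̃★δ`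
satisfies `ξ_v ε = ε★β̂ − β̃★ε`. As `β̂` and `β̃` vanish on the empty word, the right-hand side at a
word `w` only involves `ε` on shorter words, so by induction on the length `(ν^v_w)² δ_w = 0`,
hence `ε_w = ν^v_w δ_w = 0`.
-/

local infixl:70 " ★ " => conv

section Convolution

variable {A : Type*}

lemma conv_nil (x y : List A → ℂ) : (x ★ y) [] = x [] * y [] := by
  simp [conv]

lemma conv_cons (x y : List A → ℂ) (a : A) (w : List A) :
    (x ★ y) (a :: w) = x [] * y (a :: w) + ((fun u => x (a :: u)) ★ y) w := by
  simp only [conv, List.length_cons]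
  rw [Finset.sum_range_succ']
  simp [add_comm]

lemma zero_conv (x : List A → ℂ) : 0 ★ x = 0 := by
  funext w; simp [conv]

lemma conv_zero (x : List A → ℂ) : x ★ 0 = 0 := by
  funext w; simp [conv]

lemma add_conv (x y z : List A → ℂ) : (x + y) ★ z = x ★ z + y ★ z := by
  funext w; simp [conv, add_mul, Finset.sum_add_distrib]

lemma sub_conv (x y z : List A → ℂ) : (x - y) ★ z = x ★ z - y ★ z := by
  funext w; simp [conv, sub_mul, Finset.sum_sub_distrib]

lemma conv_sub (x y z : List A → ℂ) : x ★ (y - z) = x ★ y - x ★ z := by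
  funext w; simp [conv, mul_sub, Finset.sum_sub_distrib]

lemma smul_add_conv_apply (c : ℂ) (x y z : List A → ℂ) (w : List A) :
    ((fun u => c * x u + y u) ★ z) w = c * (x ★ z) w + (y ★ z) w := by
  simp [conv, Finset.mul_sum, ← Finset.sum_add_distrib, add_mul, mul_assoc]

lemma conv_assoc (x y z : List A → ℂ) : x ★ y ★ z = x ★ (y ★ z) := by
  funext w
  induction w generalizing x with
  | nil => simp [conv_nil, mul_assoc]
  | cons a w ih =>
    have hxy : (fun u => (x ★ y) (a :: u))
        = fun u => x [] * y (a :: u) + ((fun s => x (a :: s)) ★ y) u := by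
      funext u; rw [conv_cons]
    rw [conv_cons, conv_cons, conv_cons, conv_nil, hxy, smul_add_conv_apply, ih]
    ring

lemma unitCW_conv (x : List A → ℂ) : unitCW ★ x = x := by
  funext w
  cases w with
  | nil => simp [conv_nil, unitCW]
  | cons a w =>
    have h : (fun u => unitCW (a :: u)) = (0 : List A → ℂ) := by
      funext u; simp [unitCW]
    rw [conv_cons, h, zero_conv]
    simp [unitCW]

lemma conv_unitCW (x : List A → ℂ) : x ★ unitCW = x := by
  funext w
  unfold conv
  rw [Finset.sum_eq_single w.length]
  · simp [unitCW]
  · intro i hi hne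
    have hlt : i < w.length := lt_of_le_of_ne (Nat.lt_succ_iff.mp (Finset.mem_range.mp hi)) hne
    obtain ⟨b, u, hbu⟩ : ∃ b u, w.drop i = b :: u :=
      List.exists_cons_of_ne_nil (by simpa [List.drop_eq_nil_iff] using hlt)
    simp [hbu, unitCW]
  · simp

lemma eq_of_conv_eq_unitCW {x y z : List A → ℂ} (hxy : x ★ y = unitCW) (hzx : z ★ x = unitCW) :
    y = z := by
  calc y = (z ★ x) ★ y := by rw [hzx, unitCW_conv]
    _ = z ★ (x ★ y) := conv_assoc ..
    _ = z := by rw [hxy, conv_unitCW]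

lemma conv_conv_cancel {x y : List A → ℂ} (hxy : x ★ y = unitCW) (a b : List A → ℂ) :
    a ★ x ★ (y ★ b) = a ★ b := by
  rw [conv_assoc, ← conv_assoc x, hxy, unitCW_conv]

lemma conv_apply_eq_zero_of_nil_right {x y : List A → ℂ} {w : List A} (hy : y [] = 0)
    (hx : ∀ u : List A, u.length < w.length → x u = 0) : (x ★ y) w = 0 := by
  refine Finset.sum_eq_zero fun i hi => ?_
  rcases (Nat.lt_succ_iff.mp (Finset.mem_range.mp hi)).lt_or_eq with hlt | rfl
  · rw [hx _ (by simpa using hlt), zero_mul]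
  · rw [List.drop_length, hy, mul_zero]

lemma conv_apply_eq_zero_of_nil_left {x y : List A → ℂ} {w : List A} (hx : x [] = 0)
    (hy : ∀ u : List A, u.length < w.length → y u = 0) : (x ★ y) w = 0 := by
  refine Finset.sum_eq_zero fun i hi => ?_
  rcases Nat.eq_zero_or_pos i with rfl | hpos
  · rw [List.take_zero, hx, zero_mul]
  · have hi : i ≤ w.length := Nat.lt_succ_iff.mp (Finset.mem_range.mp hi)
    rw [hy _ (by simp; omega), mul_zero]

end Convolution

section Derivation

variable {A : Type*} {d : ℕ} (ν : Fin d → A → ℂ) (v : Fin d → ℂ)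

lemma nuW_append (u w : List A) : nuW ν v (u ++ w) = nuW ν v u + nuW ν v w := by
  simp [nuW]

lemma xiOp_sub (x y : List A → ℂ) : xiOp ν v (x - y) = xiOp ν v x - xiOp ν v y := by
  funext w; simp [xiOp, mul_sub]

lemma xiOp_conv (x y : List A → ℂ) :
    xiOp ν v (x ★ y) = xiOp ν v x ★ y + x ★ xiOp ν v y := by
  funext w
  simp only [xiOp, conv, Pi.add_apply, Finset.mul_sum, ← Finset.sum_add_distrib]
  refine Finset.sum_congr rfl fun i _ => ?_
  have hsplit := nuW_append ν v (w.take i) (w.drop i)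
  rw [List.take_append_drop] at hsplit
  rw [hsplit]
  ring

lemma xiOp_unitCW : xiOp ν v (unitCW : List A → ℂ) = 0 := by
  funext w
  cases w <;> simp [xiOp, nuW, unitCW]

lemma xiOp_eq_zero_of_conv_eq_unitCW {x y : List A → ℂ} (hxy : x ★ y = unitCW)
    (hyx : y ★ x = unitCW) (hx : xiOp ν v x = 0) : xiOp ν v y = 0 := by
  have hx_xiy : x ★ xiOp ν v y = 0 := by
    simpa [xiOp_conv, hx, zero_conv, xiOp_unitCW] using congrArg (xiOp ν v) hxy
  calc xiOp ν v y = (y ★ x) ★ xiOp ν v y := by rw [hyx, unitCW_conv]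
    _ = 0 := by rw [conv_assoc, hx_xiy, conv_zero]

lemma xiOp_eq_zero_of_xiOp_xiOp_eq {δ x y : List A → ℂ} (hx : x [] = 0) (hy : y [] = 0)
    (h : xiOp ν v (xiOp ν v δ) = xiOp ν v δ ★ x - y ★ xiOp ν v δ) : xiOp ν v δ = 0 := by
  suffices ∀ n, ∀ w : List A, w.length = n → xiOp ν v δ w = 0 from
    funext fun w => this _ w rfl
  intro n
  induction n using Nat.strong_induction_on with
  | _ n ih =>
    rintro w rfl
    have hshorter : ∀ u : List A, u.length < w.length → xiOp ν v δ u = 0 :=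
      fun u hu => ih _ hu u rfl
    have hsq : nuW ν v w * (nuW ν v w * δ w) = 0 := by
      have hw := congrFun h w
      rwa [Pi.sub_apply, conv_apply_eq_zero_of_nil_right hx hshorter,
        conv_apply_eq_zero_of_nil_left hy hshorter, sub_zero] at hw
    rcases mul_eq_zero.mp hsq with h0 | h0
    · simp [xiOp, h0]
    · exact h0

end Derivation

section Gauge

variable {A : Type*} {d : ℕ} (ν : Fin d → A → ℂ) (v : Fin d → ℂ)

noncomputable def gaugeTransform (κ κinv β : List A → ℂ) : List A → ℂ :=
  κ ★ β ★ κinv - xiOp ν v κ ★ κinv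

lemma gaugeTransform_nil {κ κinv β : List A → ℂ} (hβ : β [] = 0) :
    gaugeTransform ν v κ κinv β [] = 0 := by
  simp [gaugeTransform, conv_nil, xiOp, nuW, hβ]

lemma gaugeTransform_conv {δ δinv κ κinv : List A → ℂ} (hκ : κ ★ κinv = unitCW)
    (β : List A → ℂ) :
    gaugeTransform ν v (δ ★ κ) (κinv ★ δinv) β
      = gaugeTransform ν v δ δinv (gaugeTransform ν v κ κinv β) := by
  simp only [gaugeTransform, xiOp_conv, add_conv, conv_sub, sub_conv, conv_assoc δ κ β,
    conv_conv_cancel hκ]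
  simp only [conv_assoc]
  abel

lemma gaugeTransform_conv_self {δ δinv : List A → ℂ} (hδ : δinv ★ δ = unitCW)
    (β : List A → ℂ) :
    gaugeTransform ν v δ δinv β ★ δ = δ ★ β - xiOp ν v δ := by
  simp only [gaugeTransform, sub_conv, conv_assoc _ δinv δ, hδ, conv_unitCW]

lemma xiOp_gaugeTransform_eq_zero_iff {δ δinv β : List A → ℂ} (hδ₁ : δ ★ δinv = unitCW)
    (hδ₂ : δinv ★ δ = unitCW) (hβ₀ : β [] = 0) (hβ : xiOp ν v β = 0) :
    xiOp ν v (gaugeTransform ν v δ δinv β) = 0 ↔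
      xiOp ν v δ = 0 ∧ gaugeTransform ν v δ δinv β = δ ★ β ★ δinv := by
  set β' := gaugeTransform ν v δ δinv β with hβ'
  constructor
  · intro h
    have hξδ : xiOp ν v δ = δ ★ β - β' ★ δ := by
      rw [gaugeTransform_conv_self ν v hδ₂]; abel
    have hξξδ : xiOp ν v (xiOp ν v δ) = xiOp ν v δ ★ β - β' ★ xiOp ν v δ := by
      conv_lhs => rw [hξδ]
      simp only [xiOp_sub, xiOp_conv, hβ, h, conv_zero, zero_conv, add_zero, zero_add]
    have hδ₀ := xiOp_eq_zero_of_xiOp_xiOp_eq ν v hβ₀ (gaugeTransform_nil ν v hβ₀) hξξδ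
    refine ⟨hδ₀, ?_⟩
    rw [hβ', gaugeTransform, hδ₀, zero_conv, sub_zero]
  · rintro ⟨hδ₀, hβ'_eq⟩
    rw [hβ'_eq, xiOp_conv, xiOp_conv, hβ, hδ₀, xiOp_eq_zero_of_conv_eq_unitCW ν v hδ₁ hδ₂ hδ₀]
    simp only [conv_zero, zero_conv, add_zero]

end Gauge

theorem stmt14_general {A : Type*} {d : ℕ} (ν : Fin d → A → ℂ)
    (v : Fin d → ℂ) (β : List A → ℂ) (hβ : isLie β)
    (κ κinv κt κtinv δ δinv βhat βtil : List A → ℂ)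
    (hκinv₁ : conv κ κinv = unitCW) (hκinv₂ : conv κinv κ = unitCW)
    (hκtinv₁ : conv κt κtinv = unitCW)
    (hβhat : βhat = conv (conv κ β) κinv - conv (xiOp ν v κ) κinv)
    (hnorm : xiOp ν v βhat = 0)
    (hβtil : βtil = conv (conv κt β) κtinv - conv (xiOp ν v κt) κtinv)
    (hδ : δ = conv κt κinv)
    (hδinv₁ : conv δ δinv = unitCW) (hδinv₂ : conv δinv δ = unitCW) :
    xiOp ν v βtil = 0 ↔ (xiOp ν v δ = 0 ∧ βtil = conv (conv δ βhat) δinv) := by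
  have hκt : κt = δ ★ κ := by rw [hδ, conv_assoc, hκinv₂, conv_unitCW]
  have hκtinv : κtinv = κinv ★ δinv :=
    eq_of_conv_eq_unitCW hκtinv₁ (by rw [hκt, conv_conv_cancel hδinv₂, hκinv₂])
  have hβhat' : βhat = gaugeTransform ν v κ κinv β := hβhat
  have hβtil' : βtil = gaugeTransform ν v δ δinv βhat := by
    rw [hβtil, hκt, hκtinv, hβhat', ← gaugeTransform_conv ν v hκinv₁]
    rfl
  rw [hβtil']
  exact xiOp_gaugeTransform_eq_zero_iff ν v hδinv₁ hδinv₂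
    (hβhat' ▸ gaugeTransform_nil ν v hβ.1) hnorm

/-- freedom in the normal form. With `β̂ = κ★β★κ⁻¹ − (ξ_v κ)★κ⁻¹`
satisfying `ξ_v β̂ = 0`, and `β̃ = κ̃★β★κ̃⁻¹ − (ξ_v κ̃)★κ̃⁻¹`, `δ = κ̃★κ⁻¹`, one has
`ξ_v β̃ = 0` iff `ξ_v δ = 0` and `β̃ = δ★β̂★δ⁻¹`. -/
theorem stmt14 {A : Type*} [Countable A] {d : ℕ} (hd : 1 ≤ d) (ν : Fin d → A → ℂ)
    (v : Fin d → ℂ) (β : List A → ℂ) (hβ : isLie β)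
    (κ κinv κt κtinv δ δinv βhat βtil : List A → ℂ)
    (hκ : isGrp κ) (hκt : isGrp κt)
    (hκinv₁ : conv κ κinv = unitCW) (hκinv₂ : conv κinv κ = unitCW)
    (hκtinv₁ : conv κt κtinv = unitCW) (hκtinv₂ : conv κtinv κt = unitCW)
    (hβhat : βhat = conv (conv κ β) κinv - conv (xiOp ν v κ) κinv)
    (hnorm : xiOp ν v βhat = 0)
    (hβtil : βtil = conv (conv κt β) κtinv - conv (xiOp ν v κt) κtinv)
    (hδ : δ = conv κt κinv)
    (hδinv₁ : conv δ δinv = unitCW) (hδinv₂ : conv δinv δ = unitCW) :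
    xiOp ν v βtil = 0 ↔ (xiOp ν v δ = 0 ∧ βtil = conv (conv δ βhat) δinv) :=
  stmt14_general ν v β hβ κ κinv κt κtinv δ δinv βhat βtil hκinv₁ hκinv₂ hκtinv₁ hβhat hnorm hβtil
    hδ hδinv₁ hδinv₂
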